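/- arXiv:1910.04348 — 2 statements merged into one kernel-verified Lean document; each statement's English description precedes it below -/
import Mathlib

section
/- For any q₁, q₂ ∈ ℝⁿ, one has (∇A(q₁) − ∇A(q₂)) · (q₁ − q₂) ≥ (1 + (|q₁| + |q₂|)²)^{-3/2} |q₁ − q₂|², where A(q) = √(1 + |q|²). In particular the left-hand side is nonnegative, and it equals zero if and only if q₁ = q₂. -/
/-!
Writing `s = √(1 + |x|²)`, `t = √(1 + |y|²)`, one has the identity
`⟪x/s - y/t, x - y⟫ = (1/s + 1/t)/2 · |x - y|² - (|x|² - |y|²)² / (2 s t (s + t))`,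
because `t - s = (|y|² - |x|²)/(s + t)`. Bounding `(|x|² - |y|²)² ≤ (|x| + |y|)² |x - y|²` and
using `(s + t)² - (|x| + |y|)² = 2 + 2 (s t - |x| |y|) ≥ 4` (Cauchy–Schwarz in `ℝ²`) gives the
monotonicity constant `2 / (s t (s + t))`, which is at least `(1 + (|x| + |y|)²)^{-3/2}`
since `s, t ≤ √(1 + (|x| + |y|)²)`.
-/

open RealInnerProductSpace

variable {E : Type*} [NormedAddCommGroup E] [InnerProductSpace ℝ E]

/-- The gradient `∇A(q) = q / √(1 + |q|²)` of the area integrand `A(q) = √(1 + |q|²)`. -/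
noncomputable def areaGrad (q : E) : E := (√(1 + ‖q‖ ^ 2))⁻¹ • q

lemma inner_smul_sub_smul_sub (α β : ℝ) (x y : E) :
    ⟪α • x - β • y, x - y⟫ =
      (α + β) / 2 * ‖x - y‖ ^ 2 + (α - β) / 2 * (‖x‖ ^ 2 - ‖y‖ ^ 2) := by
  simp only [inner_sub_left, inner_sub_right, real_inner_smul_left, real_inner_self_eq_norm_sq,
    norm_sub_sq_real, real_inner_comm x y]
  ring

lemma one_add_mul_le_sqrt_mul_sqrt (a b : ℝ) : 1 + a * b ≤ √(1 + a ^ 2) * √(1 + b ^ 2) := by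
  rw [← Real.sqrt_mul (by positivity)]
  exact le_abs_self _ |>.trans <| Real.abs_le_sqrt <| by nlinarith [sq_nonneg (a - b)]

lemma sqrt_mul_sqrt_mul_add_le (a b : ℝ) (ha : 0 ≤ a) (hb : 0 ≤ b) :
    √(1 + a ^ 2) * √(1 + b ^ 2) * (√(1 + a ^ 2) + √(1 + b ^ 2)) ≤ 2 * √(1 + (a + b) ^ 2) ^ 3 := by
  set S := √(1 + (a + b) ^ 2)
  have hsa : √(1 + a ^ 2) ≤ S := Real.sqrt_le_sqrt (by nlinarith)
  have hsb : √(1 + b ^ 2) ≤ S := Real.sqrt_le_sqrt (by nlinarith)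
  calc _ ≤ S * S * (S + S) := by gcongr
    _ = 2 * S ^ 3 := by ring

lemma rpow_neg_three_halves {u : ℝ} (hu : 0 ≤ u) : u ^ (-(3 / 2 : ℝ)) = (√u ^ 3)⁻¹ := by
  rw [Real.sqrt_eq_rpow, ← Real.rpow_natCast, ← Real.rpow_mul hu, Real.rpow_neg hu]
  norm_num

theorem two_div_mul_norm_sub_sq_le_inner_areaGrad_sub (x y : E) :
    2 / (√(1 + ‖x‖ ^ 2) * √(1 + ‖y‖ ^ 2) * (√(1 + ‖x‖ ^ 2) + √(1 + ‖y‖ ^ 2))) * ‖x - y‖ ^ 2 ≤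
      ⟪areaGrad x - areaGrad y, x - y⟫ := by
  have hinner := inner_smul_sub_smul_sub (√(1 + ‖x‖ ^ 2))⁻¹ (√(1 + ‖y‖ ^ 2))⁻¹ x y
  have hd : (‖x‖ - ‖y‖) ^ 2 ≤ ‖x - y‖ ^ 2 :=
    sq_le_sq.2 <| (abs_norm_sub_norm_le x y).trans_eq (abs_norm _).symm
  have hst := one_add_mul_le_sqrt_mul_sqrt ‖x‖ ‖y‖
  have hs : √(1 + ‖x‖ ^ 2) ^ 2 = 1 + ‖x‖ ^ 2 := Real.sq_sqrt (by positivity)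
  have ht : √(1 + ‖y‖ ^ 2) ^ 2 = 1 + ‖y‖ ^ 2 := Real.sq_sqrt (by positivity)
  have hs₀ : 0 < √(1 + ‖x‖ ^ 2) := Real.sqrt_pos.2 (by positivity)
  have ht₀ : 0 < √(1 + ‖y‖ ^ 2) := Real.sqrt_pos.2 (by positivity)
  rw [areaGrad, areaGrad, hinner]
  generalize ‖x‖ = a, ‖y‖ = b, ‖x - y‖ = d, √(1 + ‖x‖ ^ 2) = s, √(1 + ‖y‖ ^ 2) = t at *
  have hab : (a ^ 2 - b ^ 2) ^ 2 ≤ (a + b) ^ 2 * d ^ 2 := by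
    rw [show (a ^ 2 - b ^ 2) ^ 2 = (a + b) ^ 2 * (a - b) ^ 2 by ring]
    gcongr
  have hrhs : ((s⁻¹ + t⁻¹) / 2 * d ^ 2 + (s⁻¹ - t⁻¹) / 2 * (a ^ 2 - b ^ 2)) * (s * t * (s + t)) =
      ((s + t) ^ 2 * d ^ 2 - (a ^ 2 - b ^ 2) ^ 2) / 2 := by
    calc _ = ((s + t) ^ 2 * d ^ 2 + (t ^ 2 - s ^ 2) * (a ^ 2 - b ^ 2)) / 2 := by
          field_simp
          ring
      _ = _ := by linear_combination (a ^ 2 - b ^ 2) / 2 * (ht - hs)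
  have hgap : 4 ≤ (s + t) ^ 2 - (a + b) ^ 2 := by nlinarith
  rw [div_mul_eq_mul_div, div_le_iff₀ (by positivity), hrhs]
  nlinarith [mul_le_mul_of_nonneg_right hgap (sq_nonneg d)]

theorem rpow_mul_norm_sub_sq_le_inner_areaGrad_sub (x y : E) :
    (1 + (‖x‖ + ‖y‖) ^ 2) ^ (-(3 / 2 : ℝ)) * ‖x - y‖ ^ 2 ≤ ⟪areaGrad x - areaGrad y, x - y⟫ := by
  refine le_trans ?_ (two_div_mul_norm_sub_sq_le_inner_areaGrad_sub x y)
  rw [rpow_neg_three_halves (by positivity), ← div_mul_cancel_left₀ two_ne_zero (√_ ^ 3)]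
  gcongr 2 / ?_ * _
  exact sqrt_mul_sqrt_mul_add_le _ _ (norm_nonneg x) (norm_nonneg y)

theorem inner_areaGrad_sub_nonneg (x y : E) : 0 ≤ ⟪areaGrad x - areaGrad y, x - y⟫ :=
  (by positivity : (0 : ℝ) ≤ _).trans (rpow_mul_norm_sub_sq_le_inner_areaGrad_sub x y)

theorem inner_areaGrad_sub_eq_zero_iff {x y : E} :
    ⟪areaGrad x - areaGrad y, x - y⟫ = 0 ↔ x = y := by
  refine ⟨fun h => ?_, fun h => by simp [h]⟩
  have hle := h ▸ rpow_mul_norm_sub_sq_le_inner_areaGrad_sub x y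
  have hc : 0 < (1 + (‖x‖ + ‖y‖) ^ 2) ^ (-(3 / 2 : ℝ)) := by positivity
  have hsq : ‖x - y‖ ^ 2 ≤ 0 := nonpos_of_mul_nonpos_right hle hc
  simpa [sub_eq_zero] using hsq

theorem stmt_2_general (n : ℕ)
    (g : EuclideanSpace ℝ (Fin n) → EuclideanSpace ℝ (Fin n))
    (hg : ∀ q, g q = (Real.sqrt (1 + ‖q‖ ^ 2))⁻¹ • q)
    (q₁ q₂ : EuclideanSpace ℝ (Fin n)) :
    (1 + (‖q₁‖ + ‖q₂‖) ^ 2) ^ (-(3 / 2 : ℝ)) * ‖q₁ - q₂‖ ^ 2 ≤ ⟪g q₁ - g q₂, q₁ - q₂⟫ ∧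
    0 ≤ ⟪g q₁ - g q₂, q₁ - q₂⟫ ∧
    (⟪g q₁ - g q₂, q₁ - q₂⟫ = 0 ↔ q₁ = q₂) := by
  obtain rfl : g = areaGrad := funext hg
  exact ⟨rpow_mul_norm_sub_sq_le_inner_areaGrad_sub q₁ q₂, inner_areaGrad_sub_nonneg q₁ q₂,
    inner_areaGrad_sub_eq_zero_iff⟩

/-- Quantitative monotonicity of `∇A(q) = q/√(1+|q|²)`:
`(∇A(q₁) − ∇A(q₂)) · (q₁ − q₂) ≥ (1 + (|q₁|+|q₂|)²)^{-3/2} |q₁ − q₂|²`; in particular the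
left-hand side is nonnegative and vanishes iff `q₁ = q₂`. -/
theorem stmt_2 (n : ℕ) (hn : 1 ≤ n)
    (g : EuclideanSpace ℝ (Fin n) → EuclideanSpace ℝ (Fin n))
    (hg : ∀ q, g q = (Real.sqrt (1 + ‖q‖ ^ 2))⁻¹ • q)
    (q₁ q₂ : EuclideanSpace ℝ (Fin n)) :
    (1 + (‖q₁‖ + ‖q₂‖) ^ 2) ^ (-(3 / 2 : ℝ)) * ‖q₁ - q₂‖ ^ 2 ≤ ⟪g q₁ - g q₂, q₁ - q₂⟫ ∧
    0 ≤ ⟪g q₁ - g q₂, q₁ - q₂⟫ ∧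
    (⟪g q₁ - g q₂, q₁ - q₂⟫ = 0 ↔ q₁ = q₂) :=
  stmt_2_general n g hg q₁ q₂
end

section
/- Let ν₀, ν₁, ν₂ ∈ ℝⁿ with |ν₀| = 1, |ν₁| ≤ 1, |ν₂| ≤ 1, let ρ, r, δ > 0, and suppose |ρνᵢ + rν₀| ≥ ρ + r − δ for i = 1, 2. Then |ν₁ − ν₂| ≤ 2√(2(ρ+r)δ/(ρr)). -/
/-! The identity `ρ r ‖v - u‖² + ‖ρ v + r u‖² = (ρ + r)(ρ ‖v‖² + r ‖u‖²)` shows that for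
`‖u‖, ‖v‖ ≤ 1` the defect `(ρ + r)² - ‖ρ v + r u‖²` controls `ρ r ‖v - u‖²`. The hypothesis makes
this defect at most `2(ρ + r)δ`, so each `νᵢ` lies within `√(2(ρ + r)δ/(ρ r))` of `ν₀`, and the
triangle inequality finishes. -/

open Real

section InnerProductSpace

variable {E : Type*} [NormedAddCommGroup E] [InnerProductSpace ℝ E]

theorem mul_norm_sub_sq_add_norm_smul_add_smul_sq (ρ r : ℝ) (u v : E) :
    ρ * r * ‖v - u‖ ^ 2 + ‖ρ • v + r • u‖ ^ 2 = (ρ + r) * (ρ * ‖v‖ ^ 2 + r * ‖u‖ ^ 2) := by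
  rw [norm_sub_sq_real, norm_add_sq_real, norm_smul, norm_smul, real_inner_smul_left,
    real_inner_smul_right, Real.norm_eq_abs, Real.norm_eq_abs, mul_pow, mul_pow, sq_abs, sq_abs]
  ring

theorem sq_sub_two_mul_mul_le_sq_of_sub_le {a b δ : ℝ} (ha : 0 ≤ a) (h : a - δ ≤ b) : a ^ 2 - 2 * a * δ ≤ b ^ 2 := by
  rcases le_or_gt 0 (a - δ) with hpos | hneg
  · nlinarith [pow_le_pow_left₀ hpos h 2, sq_nonneg δ]
  · nlinarith [sq_nonneg b]

theorem norm_sub_sq_le_of_le_norm_smul_add_smul {u v : E} (hu : ‖u‖ ≤ 1) (hv : ‖v‖ ≤ 1)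
    {ρ r δ : ℝ} (hρ : 0 < ρ) (hr : 0 < r) (h : ρ + r - δ ≤ ‖ρ • v + r • u‖) :
    ‖v - u‖ ^ 2 ≤ 2 * (ρ + r) * δ / (ρ * r) := by
  have hdefect := sq_sub_two_mul_mul_le_sq_of_sub_le (by positivity) h
  have hid := mul_norm_sub_sq_add_norm_smul_add_smul_sq ρ r u v
  have hu2 : ‖u‖ ^ 2 ≤ 1 := pow_le_one₀ (norm_nonneg u) hu
  have hv2 : ‖v‖ ^ 2 ≤ 1 := pow_le_one₀ (norm_nonneg v) hv
  rw [le_div_iff₀ (by positivity)]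
  nlinarith [mul_le_mul_of_nonneg_left hu2 hr.le, mul_le_mul_of_nonneg_left hv2 hρ.le]

theorem norm_sub_le_sqrt_of_le_norm_smul_add_smul {u v : E} (hu : ‖u‖ ≤ 1) (hv : ‖v‖ ≤ 1)
    {ρ r δ : ℝ} (hρ : 0 < ρ) (hr : 0 < r) (h : ρ + r - δ ≤ ‖ρ • v + r • u‖) :
    ‖v - u‖ ≤ √(2 * (ρ + r) * δ / (ρ * r)) :=
  le_sqrt_of_sq_le (norm_sub_sq_le_of_le_norm_smul_add_smul hu hv hρ hr h)

end InnerProductSpace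

theorem stmt_5_general (n : ℕ) (ν₀ ν₁ ν₂ : EuclideanSpace ℝ (Fin n))
    (hν₀ : ‖ν₀‖ = 1) (hν₁ : ‖ν₁‖ ≤ 1) (hν₂ : ‖ν₂‖ ≤ 1)
    (ρ r δ : ℝ) (hρ : 0 < ρ) (hr : 0 < r)
    (h₁ : ρ + r - δ ≤ ‖ρ • ν₁ + r • ν₀‖) (h₂ : ρ + r - δ ≤ ‖ρ • ν₂ + r • ν₀‖) :
    ‖ν₁ - ν₂‖ ≤ 2 * Real.sqrt (2 * (ρ + r) * δ / (ρ * r)) := by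
  have hd₁ := norm_sub_le_sqrt_of_le_norm_smul_add_smul hν₀.le hν₁ hρ hr h₁
  have hd₂ := norm_sub_le_sqrt_of_le_norm_smul_add_smul hν₀.le hν₂ hρ hr h₂
  calc ‖ν₁ - ν₂‖ ≤ ‖ν₁ - ν₀‖ + ‖ν₀ - ν₂‖ := norm_sub_le_norm_sub_add_norm_sub ν₁ ν₀ ν₂
    _ = ‖ν₁ - ν₀‖ + ‖ν₂ - ν₀‖ := by rw [norm_sub_rev ν₀ ν₂]
    _ ≤ 2 * √(2 * (ρ + r) * δ / (ρ * r)) := by linarith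

/-- If `|ν₀| = 1`, `|ν₁|, |ν₂| ≤ 1`, `ρ, r, δ > 0` and `|ρνᵢ + rν₀| ≥ ρ + r − δ` for
`i = 1, 2`, then `|ν₁ − ν₂| ≤ 2√(2(ρ+r)δ/(ρr))`. -/
theorem stmt_5 (n : ℕ) (hn : 1 ≤ n) (ν₀ ν₁ ν₂ : EuclideanSpace ℝ (Fin n))
    (hν₀ : ‖ν₀‖ = 1) (hν₁ : ‖ν₁‖ ≤ 1) (hν₂ : ‖ν₂‖ ≤ 1)
    (ρ r δ : ℝ) (hρ : 0 < ρ) (hr : 0 < r) (hδ : 0 < δ)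
    (h₁ : ρ + r - δ ≤ ‖ρ • ν₁ + r • ν₀‖) (h₂ : ρ + r - δ ≤ ‖ρ • ν₂ + r • ν₀‖) :
    ‖ν₁ - ν₂‖ ≤ 2 * Real.sqrt (2 * (ρ + r) * δ / (ρ * r)) :=
  stmt_5_general n ν₀ ν₁ ν₂ hν₀ hν₁ hν₂ ρ r δ hρ hr h₁ h₂
end
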